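/- Let k ≥ 2 be an integer, M a positive integer, and let σ be a k-extendible state on ℂ^M ⊗ ℂ^M (extendibility with respect to the second factor). Then Tr[Φ_M σ] ≤ 1/M + 1/k − 1/(Mk), where Φ_M is the maximally entangled state of Schmidt rank M. -/

import Mathlib

open Matrix Kronecker
open scoped ComplexOrder

noncomputable section

/-- A quantum state: a positive semidefinite matrix with unit trace. -/
def IsState {n : Type} [Fintype n] (ρ : Matrix n n ℂ) : Prop :=
  ρ.PosSemidef ∧ ρ.trace = 1

/-- A pure quantum state: a rank-one projection onto a unit vector. -/
def IsPureState {n : Type} [Fintype n] (ρ : Matrix n n ℂ) : Prop :=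
  ∃ v : n → ℂ, (∑ i, Complex.normSq (v i)) = 1 ∧ ρ = Matrix.vecMulVec v (star v)

/-- The maximally entangled state `(1/|A|) ∑_{m,m'} |mm⟩⟨m'm'|` on `A ⊗ A`. -/
def maxEnt (A : Type) [Fintype A] [DecidableEq A] : Matrix (A × A) (A × A) ℂ :=
  Matrix.of fun p q => if p.1 = p.2 ∧ q.1 = q.2 then (1 : ℂ) / (Fintype.card A : ℂ) else 0

/-- The marginal of an operator on `A ⊗ B^{⊗ k}` obtained by tracing out all but the
first copy of `B`. -/
def marginalFirst {A B : Type} [Fintype B] [DecidableEq B] {k : ℕ} (hk : 0 < k)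
    (ω : Matrix (A × (Fin k → B)) (A × (Fin k → B)) ℂ) :
    Matrix (A × B) (A × B) ℂ :=
  Matrix.of fun p q => ∑ f : Fin k → B,
    if f ⟨0, hk⟩ = p.2 then ω (p.1, f) (q.1, Function.update f ⟨0, hk⟩ q.2) else 0

/-- Conjugation `W^π ω (W^π)†` of an operator on `A ⊗ B^{⊗ k}` by the unitary permuting
the `k` copies of `B` according to `π`. -/
def permAction {A B : Type} {k : ℕ} (π : Equiv.Perm (Fin k))
    (ω : Matrix (A × (Fin k → B)) (A × (Fin k → B)) ℂ) :
    Matrix (A × (Fin k → B)) (A × (Fin k → B)) ℂ :=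
  Matrix.of fun p q => ω (p.1, p.2 ∘ π) (q.1, q.2 ∘ π)

/-- A bipartite state (or operator) `ρ` on `A ⊗ B` is `k`-extendible with respect to `B`
if it has a permutation-invariant state extension on `A ⊗ B^{⊗ k}`. -/
def kExtendible {A B : Type} [Fintype A] [Fintype B] [DecidableEq B]
    (k : ℕ) (hk : 2 ≤ k) (ρ : Matrix (A × B) (A × B) ℂ) : Prop :=
  ∃ ω : Matrix (A × (Fin k → B)) (A × (Fin k → B)) ℂ,
    IsState ω ∧ (∀ π : Equiv.Perm (Fin k), permAction π ω = ω) ∧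
      marginalFirst (show 0 < k by omega) ω = ρ

/-- The tensor extension `id_R ⊗ Φ` of a linear map on matrices. -/
def tensorId (R : Type) {A B : Type} [Fintype A] [Fintype B]
    (Φ : Matrix A A ℂ →ₗ[ℂ] Matrix B B ℂ) :
    Matrix (R × A) (R × A) ℂ →ₗ[ℂ] Matrix (R × B) (R × B) ℂ where
  toFun X := Matrix.of fun p q => Φ (Matrix.of fun i j => X (p.1, i) (q.1, j)) p.2 q.2
  map_add' X Y := by
    ext p q
    have h : (Matrix.of fun i j => (X + Y) (p.1, i) (q.1, j))
        = (Matrix.of fun i j => X (p.1, i) (q.1, j))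
          + (Matrix.of fun i j => Y (p.1, i) (q.1, j)) := rfl
    show Φ (Matrix.of fun i j => (X + Y) (p.1, i) (q.1, j)) p.2 q.2 = _
    rw [h, map_add]
    rfl
  map_smul' c X := by
    ext p q
    have h : (Matrix.of fun i j => (c • X) (p.1, i) (q.1, j))
        = c • (Matrix.of fun i j => X (p.1, i) (q.1, j)) := rfl
    show Φ (Matrix.of fun i j => (c • X) (p.1, i) (q.1, j)) p.2 q.2 = _
    rw [h, _root_.map_smul]
    rfl

/-- Complete positivity of a linear map on matrices. -/
def IsCP {A B : Type} [Fintype A] [Fintype B]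
    (Φ : Matrix A A ℂ →ₗ[ℂ] Matrix B B ℂ) : Prop :=
  ∀ (R : Type) [Fintype R] (X : Matrix (R × A) (R × A) ℂ),
    X.PosSemidef → ((tensorId R Φ) X).PosSemidef

/-- A quantum channel: a completely positive trace-preserving linear map. -/
def IsCPTP {A B : Type} [Fintype A] [Fintype B]
    (Φ : Matrix A A ℂ →ₗ[ℂ] Matrix B B ℂ) : Prop :=
  IsCP Φ ∧ ∀ X : Matrix A A ℂ, (Φ X).trace = X.trace

/-- A bipartite channel `N : AB → A'B'` is `k`-extendible if it is a channel and has a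
channel extension `M : A B^{⊗k} → A' B'^{⊗k}` whose marginal on the first `B'` copy
reproduces `N` on the corresponding marginal input state, and which is covariant with
respect to simultaneous permutations of the `k` input and output `B` factors. -/
def kExtendibleChannel {A B A' B' : Type} [Fintype A] [Fintype B] [DecidableEq B]
    [Fintype A'] [Fintype B'] [DecidableEq B']
    (k : ℕ) (hk : 2 ≤ k)
    (N : Matrix (A × B) (A × B) ℂ →ₗ[ℂ] Matrix (A' × B') (A' × B') ℂ) : Prop :=
  IsCPTP N ∧
  ∃ M : Matrix (A × (Fin k → B)) (A × (Fin k → B)) ℂ →ₗ[ℂ]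
      Matrix (A' × (Fin k → B')) (A' × (Fin k → B')) ℂ,
    IsCPTP M ∧
    (∀ θ, IsState θ →
      marginalFirst (show 0 < k by omega) (M θ)
        = N (marginalFirst (show 0 < k by omega) θ)) ∧
    (∀ (π : Equiv.Perm (Fin k)) θ, M (permAction π θ) = permAction π (M θ))

/-- The ε-hypothesis-testing divergence `D_h^ε(ρ‖σ)`, valued in the extended reals. -/
def DH {n : Type} [Fintype n] [DecidableEq n] (ε : ℝ) (ρ σ : Matrix n n ℂ) : EReal :=
  let β : ℝ := sInf { x : ℝ | ∃ Λ : Matrix n n ℂ, Λ.PosSemidef ∧ (1 - Λ).PosSemidef ∧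
      1 - ε ≤ ((Λ * ρ).trace).re ∧ x = ((Λ * σ).trace).re }
  if β ≤ 0 then ⊤ else (((- Real.logb 2 β) : ℝ) : EReal)

/-- The k-unextendible ε-hypothesis-testing divergence
`E_k^ε(A;B)_ρ = inf {D_h^ε(ρ‖σ) : σ k-extendible state}`. -/
def EkEps {A B : Type} [Fintype A] [DecidableEq A] [Fintype B] [DecidableEq B]
    (k : ℕ) (hk : 2 ≤ k) (ε : ℝ) (ρ : Matrix (A × B) (A × B) ℂ) : EReal :=
  sInf { x : EReal | ∃ σ : Matrix (A × B) (A × B) ℂ,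
    IsState σ ∧ kExtendible k hk σ ∧ x = DH ε ρ σ }

/-- The max-relative entropy `D_max(ρ‖σ) = inf {λ : ρ ≤ 2^λ σ}`, valued in the extended
reals (equal to `⊤` when the support condition fails). -/
def Dmax {n : Type} [Fintype n] (ρ σ : Matrix n n ℂ) : EReal :=
  sInf { x : EReal | ∃ lam : ℝ, x = (lam : EReal) ∧
    ((((2 : ℝ) ^ lam : ℝ) : ℂ) • σ - ρ).PosSemidef }

/-- The k-unextendible max-relative entropy of a bipartite state:
`E_k^max(A;B)_ρ = inf {D_max(ρ‖σ) : σ k-extendible state}`. -/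
def EkMaxState {A B : Type} [Fintype A] [Fintype B] [DecidableEq B]
    (k : ℕ) (hk : 2 ≤ k) (ρ : Matrix (A × B) (A × B) ℂ) : EReal :=
  sInf { x : EReal | ∃ σ : Matrix (A × B) (A × B) ℂ,
    IsState σ ∧ kExtendible k hk σ ∧ x = Dmax ρ σ }

/-- The k-unextendible max-relative entropy of a channel `N : A → B`:
`E_k^max(N) = sup_ψ E_k^max(R;B)_{(id ⊗ N)(ψ)}` over pure inputs `ψ_{RA}` with `R ≅ A`. -/
def EkMaxChannel {A B : Type} [Fintype A] [Fintype B] [DecidableEq B]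
    (k : ℕ) (hk : 2 ≤ k) (N : Matrix A A ℂ →ₗ[ℂ] Matrix B B ℂ) : EReal :=
  sSup { x : EReal | ∃ ψ : Matrix (A × A) (A × A) ℂ, IsPureState ψ ∧
    x = EkMaxState k hk (tensorId A N ψ) }

/-- The square root of a positive semidefinite matrix, as `Matrix.PosSemidef.sqrt` was
defined in the older Mathlib (removed since). -/
def Matrix.PosSemidef.sqrt {n 𝕜 : Type*} [Fintype n] [RCLike 𝕜] [DecidableEq n]
    {A : Matrix n n 𝕜} (hA : A.PosSemidef) : Matrix n n 𝕜 :=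
  (hA.1.eigenvectorUnitary : Matrix n n 𝕜) *
    diagonal (fun i => ((Real.sqrt (hA.1.eigenvalues i) : ℝ) : 𝕜)) *
    (star hA.1.eigenvectorUnitary : Matrix n n 𝕜)

open scoped Classical in
/-- The fidelity `F(ρ,σ) = ‖√ρ √σ‖₁² = (Tr √((√ρ√σ)† (√ρ√σ)))²`. -/
def fidelity {n : Type} [Fintype n] [DecidableEq n] (ρ σ : Matrix n n ℂ) : ℝ :=
  if h : ρ.PosSemidef ∧ σ.PosSemidef then
    (((Matrix.posSemidef_conjTranspose_mul_self (h.1.sqrt * h.2.sqrt)).sqrt).trace.re) ^ 2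
  else 0

/-- Reshuffling `(X ⊗ Y) ⊗ Z ≃ (X ⊗ Z) ⊗ Y`. -/
def assocShuffle (X Y Z : Type) : (X × Y) × Z ≃ (X × Z) × Y where
  toFun p := ((p.1.1, p.2), p.1.2)
  invFun p := ((p.1.1, p.2), p.1.2)
  left_inv _ := rfl
  right_inv _ := rfl

/-- Reshuffling `(X ⊗ Z) ⊗ W ≃ X ⊗ (W ⊗ Z)`. -/
def outShuffle (X Z W : Type) : (X × Z) × W ≃ X × (W × Z) where
  toFun p := (p.1.1, (p.2, p.1.2))
  invFun p := ((p.1, p.2.2), p.2.1)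
  left_inv _ := rfl
  right_inv _ := rfl

/-- Application of the channel `N : A → B` to the `A` factor of an operator on
`(X ⊗ A) ⊗ Z`, producing an operator on `X ⊗ (B ⊗ Z)`. -/
def channelStep (X Z : Type) [Fintype X] [Fintype Z] {A B : Type} [Fintype A] [Fintype B]
    (N : Matrix A A ℂ →ₗ[ℂ] Matrix B B ℂ)
    (ρ : Matrix ((X × A) × Z) ((X × A) × Z) ℂ) :
    Matrix (X × (B × Z)) (X × (B × Z)) ℂ :=
  (Matrix.reindex (outShuffle X Z B) (outShuffle X Z B))
    ((tensorId (X × Z) N)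
      ((Matrix.reindex (assocShuffle X A Z) (assocShuffle X A Z)) ρ))

/-- A separable bipartite state: a convex combination of product states. -/
def Separable {A B : Type} [Fintype A] [Fintype B]
    (σ : Matrix (A × B) (A × B) ℂ) : Prop :=
  ∃ (m : ℕ) (p : Fin m → ℝ) (τ : Fin m → Matrix A A ℂ) (ω : Fin m → Matrix B B ℂ),
    (∀ x, 0 ≤ p x) ∧ (∑ x, p x = 1) ∧ (∀ x, IsState (τ x)) ∧ (∀ x, IsState (ω x)) ∧
      σ = ∑ x, ((p x : ℂ) • (τ x ⊗ₖ ω x))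

/-- The tensor product `E ⊗ F` of two linear maps on matrices. -/
def tensorMap {A B A' B' : Type} [Fintype A] [Fintype B] [Fintype A'] [Fintype B']
    (E : Matrix A A ℂ →ₗ[ℂ] Matrix A' A' ℂ)
    (F : Matrix B B ℂ →ₗ[ℂ] Matrix B' B' ℂ) :
    Matrix (A × B) (A × B) ℂ →ₗ[ℂ] Matrix (A' × B') (A' × B') ℂ :=
  (Matrix.reindexLinearEquiv ℂ ℂ (Equiv.prodComm B' A') (Equiv.prodComm B' A')).toLinearMap
    ∘ₗ (tensorId B' E)
    ∘ₗ (Matrix.reindexLinearEquiv ℂ ℂ (Equiv.prodComm A B') (Equiv.prodComm A B')).toLinearMap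
    ∘ₗ (tensorId A F)

/-- A one-way LOCC channel from Alice to Bob: `L = ∑_y E^y ⊗ F^y` with `{E^y}` a quantum
instrument on Alice's side and each `F^y` a channel on Bob's side. -/
def IsOneWayLOCC {A B A' B' : Type} [Fintype A] [Fintype B] [Fintype A'] [Fintype B']
    (L : Matrix (A × B) (A × B) ℂ →ₗ[ℂ] Matrix (A' × B') (A' × B') ℂ) : Prop :=
  ∃ (m : ℕ) (E : Fin m → (Matrix A A ℂ →ₗ[ℂ] Matrix A' A' ℂ))
      (F : Fin m → (Matrix B B ℂ →ₗ[ℂ] Matrix B' B' ℂ)),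
    (∀ y, IsCP (E y)) ∧ (∀ X : Matrix A A ℂ, (∑ y, (E y) X).trace = X.trace) ∧
    (∀ y, IsCPTP (F y)) ∧ L = ∑ y, tensorMap (E y) (F y)

end

noncomputable section KEaux

variable {k M : ℕ}

/-- auxiliary projector `Φ_{A B_i} ⊗ I` -/
def KEP (M : ℕ) {k : ℕ} (i : Fin k) :
    Matrix (Fin M × (Fin k → Fin M)) (Fin M × (Fin k → Fin M)) ℂ :=
  Matrix.of fun p q =>
    if p.1 = p.2 i ∧ q.2 = Function.update p.2 i q.1 then (M : ℂ)⁻¹ else 0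

lemma KEP_cond_iff (i : Fin k) (p q : Fin M × (Fin k → Fin M)) :
    (p.1 = p.2 i ∧ q.2 = Function.update p.2 i q.1) ↔
      (p.1 = p.2 i ∧ q.1 = q.2 i ∧ ∀ l, l ≠ i → p.2 l = q.2 l) := by
  constructor
  · rintro ⟨h1, h2⟩
    refine ⟨h1, ?_, fun l hl => ?_⟩
    · rw [h2, Function.update_self]
    · rw [h2, Function.update_of_ne hl]
  · rintro ⟨h1, h2, h3⟩
    refine ⟨h1, funext fun l => ?_⟩
    by_cases hl : l = i
    · subst hl; rw [Function.update_self, h2]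
    · rw [Function.update_of_ne hl, ← h3 l hl]

lemma KEP_herm (i : Fin k) : (KEP M i)ᴴ = KEP M i := by
  ext p q
  simp only [conjTranspose_apply, KEP, Matrix.of_apply, KEP_cond_iff]
  by_cases hc : p.1 = p.2 i ∧ q.1 = q.2 i ∧ ∀ l, l ≠ i → p.2 l = q.2 l
  · rw [if_pos ⟨hc.2.1, hc.1, fun l hl => (hc.2.2 l hl).symm⟩, if_pos hc]
    simp
  · rw [if_neg (fun h => hc ⟨h.2.1, h.1, fun l hl => (h.2.2 l hl).symm⟩), if_neg hc]
    simp

lemma KEP_mul_left (i : Fin k) (X : Matrix (Fin M × (Fin k → Fin M)) (Fin M × (Fin k → Fin M)) ℂ)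
    (p q : Fin M × (Fin k → Fin M)) :
    (KEP M i * X) p q
      = (M : ℂ)⁻¹ * (if p.1 = p.2 i then ∑ c, X (c, Function.update p.2 i c) q else 0) := by
  rw [Matrix.mul_apply, Fintype.sum_prod_type]
  by_cases h1 : p.1 = p.2 i
  · simp only [KEP, Matrix.of_apply, h1, true_and, if_pos, ite_mul, zero_mul]
    rw [Finset.mul_sum]
    refine Finset.sum_congr rfl fun c _ => ?_
    rw [Finset.sum_eq_single (Function.update p.2 i c)]
    · simp
    · intro h _ hh; rw [if_neg]; exact fun e => hh e
    · intro h; exact absurd (Finset.mem_univ _) h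
  · simp only [KEP, Matrix.of_apply, h1, false_and, if_false, zero_mul,
      Finset.sum_const_zero, mul_zero]

lemma KEP_mul_right (i : Fin k) (X : Matrix (Fin M × (Fin k → Fin M)) (Fin M × (Fin k → Fin M)) ℂ)
    (p q : Fin M × (Fin k → Fin M)) :
    (X * KEP M i) p q
      = (M : ℂ)⁻¹ * (if q.1 = q.2 i then ∑ c, X p (c, Function.update q.2 i c) else 0) := by
  rw [Matrix.mul_apply, Fintype.sum_prod_type]
  by_cases h1 : q.1 = q.2 i
  · rw [if_pos h1, Finset.mul_sum]
    refine Finset.sum_congr rfl fun c _ => ?_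
    rw [Finset.sum_eq_single (Function.update q.2 i c)]
    · rw [KEP, Matrix.of_apply, if_pos, mul_comm]
      refine ⟨by simp, ?_⟩
      funext l
      by_cases hl : l = i
      · subst hl; simpa using h1.symm
      · simp [Function.update_of_ne hl]
    · intro h _ hh
      rw [KEP, Matrix.of_apply, if_neg, mul_zero]
      rintro ⟨ha, hb⟩
      apply hh
      funext l
      by_cases hl : l = i
      · subst hl
        simp only [Function.update_self]
        exact ha.symm
      · rw [Function.update_of_ne hl]
        have := congrFun hb l
        rw [Function.update_of_ne hl] at this
        exact this.symm
    · intro h; exact absurd (Finset.mem_univ _) h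
  · simp only [if_neg h1, mul_zero]
    refine Finset.sum_eq_zero fun c _ => Finset.sum_eq_zero fun h _ => ?_
    rw [KEP, Matrix.of_apply, if_neg, mul_zero]
    rintro ⟨ha, hb⟩
    exact h1 (by rw [congrFun hb i, Function.update_self])



lemma KEP_mul_self (hM : 0 < M) (i : Fin k) : KEP M i * KEP M i = KEP M i := by
  ext p q
  rw [KEP_mul_right]
  have hent : ∀ c : Fin M, KEP M i p (c, Function.update q.2 i c)
      = if p.1 = p.2 i ∧ ∀ l, l ≠ i → p.2 l = q.2 l then (M : ℂ)⁻¹ else 0 := by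
    intro c
    rw [KEP, Matrix.of_apply]
    refine if_congr (and_congr_right' ?_) rfl rfl
    dsimp only
    constructor
    · rintro h2 l hl
      have := congrFun h2 l
      rw [Function.update_of_ne hl, Function.update_of_ne hl] at this
      exact this.symm
    · intro h2
      funext l
      by_cases hl : l = i
      · subst hl; simp
      · rw [Function.update_of_ne hl, Function.update_of_ne hl]
        exact (h2 l hl).symm
  by_cases h2 : p.1 = p.2 i ∧ ∀ l, l ≠ i → p.2 l = q.2 l
  · simp only [hent, if_pos h2]
    rw [Finset.sum_const, Finset.card_univ, Fintype.card_fin, nsmul_eq_mul]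
    by_cases h1 : q.1 = q.2 i
    · rw [if_pos h1, KEP, Matrix.of_apply,
        if_pos ((KEP_cond_iff i p q).mpr ⟨h2.1, h1, h2.2⟩)]
      have hMne : (M : ℂ) ≠ 0 := Nat.cast_ne_zero.mpr hM.ne'
      field_simp
    · rw [if_neg h1, mul_zero, KEP, Matrix.of_apply, if_neg]
      intro hc
      exact h1 ((KEP_cond_iff i p q).mp hc).2.1
  · simp only [hent, if_neg h2, Finset.sum_const_zero, mul_zero, ite_self]
    rw [KEP, Matrix.of_apply, if_neg]
    intro hc
    have := (KEP_cond_iff i p q).mp hc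
    exact h2 ⟨this.1, this.2.2⟩

lemma KEP_mul_mul (hM : 0 < M) {i j : Fin k} (hij : i ≠ j) :
    KEP M j * KEP M i * KEP M j = (((M : ℂ)^2)⁻¹) • KEP M j := by
  have hMne : (M : ℂ) ≠ 0 := Nat.cast_ne_zero.mpr hM.ne'
  ext p q
  rw [Matrix.smul_apply, KEP_mul_right]
  have hin : ∀ c d : Fin M, KEP M i (d, Function.update p.2 j d) (c, Function.update q.2 j c)
      = if d = p.2 i ∧ c = p.2 i ∧ q.2 i = p.2 i ∧ (∀ l, l ≠ i → l ≠ j → p.2 l = q.2 l)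
        then (M : ℂ)⁻¹ else 0 := by
    intro c d
    rw [KEP, Matrix.of_apply]
    refine if_congr ?_ rfl rfl
    dsimp only
    constructor
    · rintro ⟨h1, h2⟩
      rw [Function.update_of_ne hij] at h1
      have hcd : c = d := by
        have := congrFun h2 j
        rwa [Function.update_self, Function.update_of_ne (Ne.symm hij),
          Function.update_self] at this
      have hqi : q.2 i = c := by
        have := congrFun h2 i
        rwa [Function.update_of_ne hij, Function.update_self] at this
      refine ⟨h1, hcd.trans h1, by rw [hqi, hcd, h1], fun l hli hlj => ?_⟩
      have := congrFun h2 l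
      rw [Function.update_of_ne hlj, Function.update_of_ne hli,
        Function.update_of_ne hlj] at this
      exact this.symm
    · rintro ⟨h1, h2, h3, h4⟩
      refine ⟨by rw [Function.update_of_ne hij]; exact h1, funext fun l => ?_⟩
      by_cases hli : l = i
      · subst hli
        rw [Function.update_of_ne hij, Function.update_self, h3, h2]
      · by_cases hlj : l = j
        · subst hlj
          rw [Function.update_self, Function.update_of_ne (Ne.symm hij),
            Function.update_self, h2, h1]
        · rw [Function.update_of_ne hlj, Function.update_of_ne hli, Function.update_of_ne hlj]
          exact (h4 l hli hlj).symm
  have hmid : ∀ c : Fin M, (KEP M j * KEP M i) p (c, Function.update q.2 j c)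
      = (M : ℂ)⁻¹ * (if p.1 = p.2 j then
          (if c = p.2 i ∧ q.2 i = p.2 i ∧ (∀ l, l ≠ i → l ≠ j → p.2 l = q.2 l)
            then (M : ℂ)⁻¹ else 0) else 0) := by
    intro c
    rw [KEP_mul_left]
    congr 1
    by_cases hp : p.1 = p.2 j
    · rw [if_pos hp, if_pos hp]
      simp only [hin, ite_and]
      rw [Finset.sum_ite_eq' Finset.univ (p.2 i)
        (fun _ => if c = p.2 i then if q.2 i = p.2 i then
          if (∀ l, l ≠ i → l ≠ j → p.2 l = q.2 l) then (M : ℂ)⁻¹ else 0 else 0 else 0)]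
      simp [ite_and]
    · rw [if_neg hp, if_neg hp]
  simp only [hmid]
  by_cases hq : q.1 = q.2 j
  swap
  · rw [if_neg hq, mul_zero, KEP, Matrix.of_apply, if_neg, smul_zero]
    intro hc
    exact hq ((KEP_cond_iff j p q).mp hc).2.1
  rw [if_pos hq]
  by_cases hp : p.1 = p.2 j
  swap
  · simp only [if_neg hp, mul_zero, Finset.sum_const_zero]
    rw [KEP, Matrix.of_apply, if_neg, smul_zero]
    intro hc
    exact hp ((KEP_cond_iff j p q).mp hc).1
  simp only [if_pos hp, ite_and]
  rw [← Finset.mul_sum, Finset.sum_ite_eq' Finset.univ (p.2 i)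
    (fun _ => if q.2 i = p.2 i then
      if (∀ l, l ≠ i → l ≠ j → p.2 l = q.2 l) then (M : ℂ)⁻¹ else 0 else 0)]
  rw [if_pos (Finset.mem_univ _)]
  by_cases hoff : ∀ l, l ≠ j → p.2 l = q.2 l
  · rw [if_pos ((hoff i hij).symm), if_pos (fun l hli hlj => hoff l hlj),
      KEP, Matrix.of_apply, if_pos ((KEP_cond_iff j p q).mpr ⟨hp, hq, hoff⟩)]
    rw [smul_eq_mul]
    field_simp
  · rw [KEP, Matrix.of_apply, if_neg
      (fun hc => hoff ((KEP_cond_iff j p q).mp hc).2.2), smul_zero]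
    by_cases h3 : q.2 i = p.2 i
    · rw [if_pos h3, if_neg, mul_zero, mul_zero]
      intro h4
      exact hoff (fun l hl => by
        by_cases hli : l = i
        · subst hli; exact h3.symm
        · exact h4 l hli hl)
    · rw [if_neg h3, mul_zero, mul_zero]

end KEaux


lemma KEP_trace_marginal {k M : ℕ} (hk0 : 0 < k)
    (ω : Matrix (Fin M × (Fin k → Fin M)) (Fin M × (Fin k → Fin M)) ℂ) :
    (KEP M ⟨0, hk0⟩ * ω).trace = (maxEnt (Fin M) * marginalFirst hk0 ω).trace := by
  have hL : (KEP M ⟨0, hk0⟩ * ω).trace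
      = ∑ p : (Fin k → Fin M) × Fin M,
        (M : ℂ)⁻¹ * ω (p.2, Function.update p.1 ⟨0, hk0⟩ p.2) (p.1 ⟨0, hk0⟩, p.1) := by
    simp only [Matrix.trace, Matrix.diag_apply, Matrix.mul_apply, KEP, Matrix.of_apply,
      Fintype.sum_prod_type, ite_and, ite_mul, mul_ite, zero_mul, mul_zero,
      Finset.sum_ite_irrel, Finset.sum_const_zero]
    rw [Finset.sum_comm]
    simp only [Finset.sum_ite_eq', Finset.mem_univ, if_true]
  have stage1 : ∀ X : Matrix (Fin M × Fin M) (Fin M × Fin M) ℂ,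
      (maxEnt (Fin M) * X).trace = ∑ y : Fin M, ∑ x2 : Fin M, (M : ℂ)⁻¹ * X (x2, x2) (y, y) := by
    intro X
    simp only [Matrix.trace, Matrix.diag_apply, Matrix.mul_apply, maxEnt, Matrix.of_apply,
      Fintype.sum_prod_type, ite_and, ite_mul, zero_mul, Finset.sum_ite_irrel,
      Finset.sum_const_zero, Finset.sum_ite_eq, Finset.sum_ite_eq', Finset.mem_univ, if_true,
      one_div, Fintype.card_fin]
  have hR : (maxEnt (Fin M) * marginalFirst hk0 ω).trace
      = ∑ p : (Fin k → Fin M) × Fin M,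
        (M : ℂ)⁻¹ * ω (p.1 ⟨0, hk0⟩, p.1) (p.2, Function.update p.1 ⟨0, hk0⟩ p.2) := by
    rw [stage1]
    simp only [marginalFirst, Matrix.of_apply, Finset.mul_sum, mul_ite, mul_zero]
    have step : ∀ y : Fin M,
        (∑ x2 : Fin M, ∑ x3 : Fin k → Fin M,
          if x3 ⟨0, hk0⟩ = x2 then
            (M : ℂ)⁻¹ * ω (x2, x3) (y, Function.update x3 ⟨0, hk0⟩ y) else 0)
        = ∑ x3 : Fin k → Fin M,
            (M : ℂ)⁻¹ * ω (x3 ⟨0, hk0⟩, x3) (y, Function.update x3 ⟨0, hk0⟩ y) := by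
      intro y
      rw [Finset.sum_comm]
      simp only [Finset.sum_ite_eq, Finset.mem_univ, if_true]
    simp only [step]
    rw [Finset.sum_comm]
    exact (Fintype.sum_prod_type (fun p : (Fin k → Fin M) × Fin M =>
      (M : ℂ)⁻¹ * ω (p.1 ⟨0, hk0⟩, p.1) (p.2, Function.update p.1 ⟨0, hk0⟩ p.2))).symm
  rw [hL, hR]
  refine Fintype.sum_bijective
    (fun p => (Function.update p.1 ⟨0, hk0⟩ p.2, p.1 ⟨0, hk0⟩))
    (Function.Involutive.bijective ?_) _ _ ?_
  · intro p
    dsimp only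
    rw [Function.update_self, Function.update_idem, Function.update_eq_self]
  · intro p
    dsimp only
    rw [Function.update_self, Function.update_idem, Function.update_eq_self]

lemma KEP_trace_perm {k M : ℕ} (z i : Fin k)
    (ω : Matrix (Fin M × (Fin k → Fin M)) (Fin M × (Fin k → Fin M)) ℂ)
    (hω : permAction (Equiv.swap z i) ω = ω) :
    (KEP M i * ω).trace = (KEP M z * ω).trace := by
  set π : Equiv.Perm (Fin k) := Equiv.swap z i with hπ
  have hππ : ∀ l, π (π l) = l := fun l => Equiv.swap_apply_self z i l
  have hent : ∀ p q : Fin M × (Fin k → Fin M),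
      KEP M i p q = KEP M z (p.1, p.2 ∘ π) (q.1, q.2 ∘ π) := by
    intro p q
    rw [KEP, KEP, Matrix.of_apply, Matrix.of_apply]
    refine if_congr ?_ rfl rfl
    have hupd : ∀ l, Function.update (p.2 ∘ π) z q.1 l = Function.update p.2 i q.1 (π l) := by
      intro l
      by_cases hl : l = z
      · subst hl
        rw [Function.update_self, Equiv.swap_apply_left, Function.update_self]
      · rw [Function.update_of_ne hl, Function.comp_apply, Function.update_of_ne]
        intro hc
        refine hl ?_
        rw [← hππ l, hc, hπ]
        exact Equiv.swap_apply_right z i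
    dsimp only
    constructor
    · rintro ⟨h1, h2⟩
      refine ⟨by rw [Function.comp_apply, Equiv.swap_apply_left]; exact h1, funext fun l => ?_⟩
      rw [Function.comp_apply, hupd l]
      exact congrFun h2 (π l)
    · rintro ⟨h1, h2⟩
      rw [Function.comp_apply, Equiv.swap_apply_left] at h1
      refine ⟨h1, funext fun l => ?_⟩
      have := congrFun h2 (π l)
      rw [Function.comp_apply, hππ l, hupd (π l), hππ l] at this
      exact this
  have hωe : ∀ p q : Fin M × (Fin k → Fin M), ω q p = ω (q.1, q.2 ∘ π) (p.1, p.2 ∘ π) := by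
    intro p q
    conv_lhs => rw [← hω]
    rfl
  have htr : ∀ A : Matrix (Fin M × (Fin k → Fin M)) (Fin M × (Fin k → Fin M)) ℂ,
      (A * ω).trace = ∑ p, ∑ q, A p q * ω q p := by
    intro A
    simp only [Matrix.trace, Matrix.diag_apply, Matrix.mul_apply]
  rw [htr, htr]
  have hE : Function.Involutive (fun p : Fin M × (Fin k → Fin M) => (p.1, p.2 ∘ π)) := by
    intro p
    refine Prod.ext rfl ?_
    funext l
    exact congrArg p.2 (hππ l)
  have step1 : ∀ p : Fin M × (Fin k → Fin M),
      (∑ q : Fin M × (Fin k → Fin M),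
        KEP M z (p.1, p.2 ∘ π) (q.1, q.2 ∘ π) * ω (q.1, q.2 ∘ π) (p.1, p.2 ∘ π))
      = ∑ q : Fin M × (Fin k → Fin M), KEP M z (p.1, p.2 ∘ π) q * ω q (p.1, p.2 ∘ π) := by
    intro p
    exact Fintype.sum_bijective _ hE.bijective
      (fun q => KEP M z (p.1, p.2 ∘ π) (q.1, q.2 ∘ π) * ω (q.1, q.2 ∘ π) (p.1, p.2 ∘ π))
      (fun q => KEP M z (p.1, p.2 ∘ π) q * ω q (p.1, p.2 ∘ π)) (fun q => rfl)
  calc (∑ p : Fin M × (Fin k → Fin M), ∑ q : Fin M × (Fin k → Fin M), KEP M i p q * ω q p)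
      = ∑ p : Fin M × (Fin k → Fin M), ∑ q : Fin M × (Fin k → Fin M),
          KEP M z (p.1, p.2 ∘ π) q * ω q (p.1, p.2 ∘ π) := by
        refine Finset.sum_congr rfl fun p _ => ?_
        rw [← step1]
        refine Finset.sum_congr rfl fun q _ => ?_
        rw [hent p q, ← hωe p q]
    _ = ∑ p : Fin M × (Fin k → Fin M), ∑ q : Fin M × (Fin k → Fin M), KEP M z p q * ω q p :=
        Fintype.sum_bijective _ hE.bijective
          (fun p : Fin M × (Fin k → Fin M) =>
            ∑ q : Fin M × (Fin k → Fin M), KEP M z (p.1, p.2 ∘ π) q * ω q (p.1, p.2 ∘ π))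
          (fun p : Fin M × (Fin k → Fin M) =>
            ∑ q : Fin M × (Fin k → Fin M), KEP M z p q * ω q p) (fun p => rfl)


lemma psd_trace_re_nonneg {n : Type} [Fintype n] [DecidableEq n] {A : Matrix n n ℂ}
    (hA : A.PosSemidef) : 0 ≤ A.trace.re := by
  have hdiag : ∀ i, 0 ≤ (A i i).re := by
    intro i
    have h := hA.dotProduct_mulVec_nonneg (Pi.single i 1)
    have h2 := (Complex.nonneg_iff.mp h).1
    have he : dotProduct (star (Pi.single i 1)) (A *ᵥ Pi.single i 1) = A i i := by
      simp [dotProduct, Matrix.mulVec, Pi.single_apply, apply_ite,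
        Finset.sum_ite_eq, Finset.sum_ite_eq', mul_ite, ite_mul]
    rwa [he] at h2
  rw [Matrix.trace]
  rw [Complex.re_sum]
  exact Finset.sum_nonneg fun i _ => hdiag i

lemma psd_sandwich_trace_re_nonneg {n : Type} [Fintype n] [DecidableEq n]
    {ω : Matrix n n ℂ} (hω : ω.PosSemidef) (D : Matrix n n ℂ) :
    0 ≤ ((D * Dᴴ * ω).trace).re := by
  have h1 := hω.conjTranspose_mul_mul_same D
  have h2 := psd_trace_re_nonneg h1
  rwa [Matrix.trace_mul_cycle] at h2

lemma KEP_conj_trace {k M : ℕ} (i j : Fin k)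
    {ω : Matrix (Fin M × (Fin k → Fin M)) (Fin M × (Fin k → Fin M)) ℂ}
    (hω : ωᴴ = ω) :
    ((KEP M j * KEP M i * ω).trace) = star ((KEP M i * KEP M j * ω).trace) := by
  rw [← Matrix.trace_conjTranspose (KEP M i * KEP M j * ω)]
  rw [Matrix.conjTranspose_mul, Matrix.conjTranspose_mul, hω, KEP_herm, KEP_herm]
  rw [Matrix.trace_mul_cycle]
  rw [Matrix.mul_assoc]

lemma KEP_offdiag_bound {k M : ℕ} (hM : 0 < M) {i j : Fin k} (hij : i ≠ j)
    {ω : Matrix (Fin M × (Fin k → Fin M)) (Fin M × (Fin k → Fin M)) ℂ}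
    (hω : ω.PosSemidef) :
    (M : ℝ) * (((KEP M i * KEP M j * ω).trace).re + ((KEP M j * KEP M i * ω).trace).re)
      ≤ ((KEP M i * ω).trace).re + ((KEP M j * ω).trace).re := by
  have hMne : (M : ℂ) ≠ 0 := Nat.cast_ne_zero.mpr hM.ne'
  set D : Matrix (Fin M × (Fin k → Fin M)) (Fin M × (Fin k → Fin M)) ℂ :=
    KEP M i - (M : ℂ) • (KEP M j * KEP M i) with hD
  have hDH : Dᴴ = KEP M i - (M : ℂ) • (KEP M i * KEP M j) := by
    rw [hD, Matrix.conjTranspose_sub, Matrix.conjTranspose_smul, Matrix.conjTranspose_mul,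
      KEP_herm, KEP_herm, star_natCast]
    -- done
  have hDD : D * Dᴴ = KEP M i + KEP M j
      - (M : ℂ) • (KEP M i * KEP M j) - (M : ℂ) • (KEP M j * KEP M i) := by
    rw [hDH, hD, sub_mul, mul_sub, mul_sub, smul_mul_assoc, smul_mul_assoc,
      mul_smul_comm, mul_smul_comm, smul_smul]
    rw [KEP_mul_self hM i]
    rw [show KEP M i * (KEP M i * KEP M j) = KEP M i * KEP M j by
      rw [← Matrix.mul_assoc, KEP_mul_self hM i]]
    rw [show KEP M j * KEP M i * KEP M i = KEP M j * KEP M i by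
      rw [Matrix.mul_assoc, KEP_mul_self hM i]]
    rw [show KEP M j * KEP M i * (KEP M i * KEP M j) = ((M : ℂ)^2)⁻¹ • KEP M j by
      rw [← Matrix.mul_assoc, Matrix.mul_assoc (KEP M j) (KEP M i) (KEP M i),
        KEP_mul_self hM i, KEP_mul_mul hM hij]]
    rw [smul_smul, show (M : ℂ) * (M : ℂ) * ((M : ℂ)^2)⁻¹ = 1 by
      rw [← pow_two]; field_simp]
    rw [one_smul]
    abel
  have h0 := psd_sandwich_trace_re_nonneg hω D
  rw [hDD] at h0
  have hexp : ((KEP M i + KEP M j - (M : ℂ) • (KEP M i * KEP M j)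
        - (M : ℂ) • (KEP M j * KEP M i)) * ω).trace
      = (KEP M i * ω).trace + (KEP M j * ω).trace
        - (M : ℂ) * (KEP M i * KEP M j * ω).trace
        - (M : ℂ) * (KEP M j * KEP M i * ω).trace := by
    rw [sub_mul, sub_mul, add_mul, smul_mul_assoc, smul_mul_assoc,
      Matrix.trace_sub, Matrix.trace_sub, Matrix.trace_add,
      Matrix.trace_smul, Matrix.trace_smul, smul_eq_mul, smul_eq_mul]
  rw [hexp] at h0
  have hre : ∀ z : ℂ, ((M : ℂ) * z).re = (M : ℝ) * z.re := by
    intro z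
    simp [Complex.mul_re]
  simp only [Complex.sub_re, Complex.add_re, hre] at h0
  linarith


/-- the overlap of any `k`-extendible state with the maximally entangled
state of Schmidt rank `M` is at most `1/M + 1/k - 1/(Mk)`. -/
theorem kExtendible_maxEnt_overlap
    (k : ℕ) (hk : 2 ≤ k) (M : ℕ) (hM : 0 < M)
    (σ : Matrix (Fin M × Fin M) (Fin M × Fin M) ℂ) (hσ : IsState σ)
    (hσext : kExtendible k hk σ) :
    ((maxEnt (Fin M) * σ).trace).re
      ≤ 1 / (M : ℝ) + 1 / (k : ℝ) - 1 / ((M : ℝ) * (k : ℝ)) := by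
  classical
  obtain ⟨ω, ⟨hωpsd, hωtr⟩, hperm, hmarg⟩ := hσext
  have hk0 : 0 < k := by omega
  have hmarg' : marginalFirst hk0 ω = σ := hmarg
  have hmR0 : (0:ℝ) < (M:ℝ) := Nat.cast_pos.mpr hM
  have hkR0 : (0:ℝ) < (k:ℝ) := Nat.cast_pos.mpr (by omega)
  have hk1R : (1:ℝ) ≤ (k:ℝ) := by exact_mod_cast hk0
  set t : ℝ := ((maxEnt (Fin M) * σ).trace).re with ht
  have htri : ∀ i : Fin k, (KEP M i * ω).trace = (maxEnt (Fin M) * σ).trace := by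
    intro i
    rw [KEP_trace_perm ⟨0, hk0⟩ i ω (hperm (Equiv.swap ⟨0, hk0⟩ i)),
      KEP_trace_marginal hk0 ω, hmarg']
  set S := ∑ i : Fin k, KEP M i with hS
  have hSω : (S * ω).trace = (k : ℂ) * (maxEnt (Fin M) * σ).trace := by
    rw [hS, Finset.sum_mul, Matrix.trace_sum]
    simp only [htri]
    rw [Finset.sum_const, Finset.card_univ, Fintype.card_fin, nsmul_eq_mul]
  set s : ℝ := (k:ℝ) * t with hs
  have hSωre : ((S * ω).trace).re = s := by
    rw [hSω, show ((k:ℕ):ℂ) = (((k:ℕ):ℝ):ℂ) by push_cast; rfl, Complex.re_ofReal_mul, hs]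
  set A := ((s : ℂ) • (1 : Matrix (Fin M × (Fin k → Fin M)) (Fin M × (Fin k → Fin M)) ℂ) - S)
    with hA
  have hSh : Sᴴ = S := by
    rw [hS, Matrix.conjTranspose_sum]
    exact Finset.sum_congr rfl fun i _ => KEP_herm i
  have hAH : Aᴴ = (s:ℂ) • (1 : Matrix (Fin M × (Fin k → Fin M)) (Fin M × (Fin k → Fin M)) ℂ)
      - S := by
    rw [hA, Matrix.conjTranspose_sub, Matrix.conjTranspose_smul, Matrix.conjTranspose_one, hSh,
      Complex.star_def, Complex.conj_ofReal]
  have hAω : A * ω = (s:ℂ) • ω - S * ω := by rw [hA, sub_mul, smul_mul_assoc, one_mul]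
  have h1 : (A * ω * Aᴴ).trace = (s:ℂ) * ((A * ω).trace) - (A * ω * S).trace := by
    rw [hAH, mul_sub, Matrix.trace_sub, mul_smul_comm, mul_one, Matrix.trace_smul, smul_eq_mul]
  have h2 : (A * ω).trace = (s:ℂ) - (S * ω).trace := by
    rw [hAω, Matrix.trace_sub, Matrix.trace_smul, hωtr, smul_eq_mul, mul_one]
  have h3 : (A * ω * S).trace = (s:ℂ) * (S * ω).trace - (S * S * ω).trace := by
    rw [hAω, sub_mul, smul_mul_assoc, Matrix.trace_sub, Matrix.trace_smul, smul_eq_mul,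
      Matrix.trace_mul_comm ω S, Matrix.trace_mul_cycle S ω S]
  have hcs : 0 ≤ ((A * ω * Aᴴ).trace).re :=
    psd_trace_re_nonneg (hωpsd.mul_mul_conjTranspose_same A)
  rw [h1, h2, h3] at hcs
  have hquad : s * s ≤ ((S * S * ω).trace).re := by
    have e1 : ((s:ℂ) * ((s:ℂ) - (S * ω).trace) - ((s:ℂ) * (S * ω).trace
        - (S * S * ω).trace)).re
        = s * (s - ((S * ω).trace).re) - (s * ((S * ω).trace).re - ((S * S * ω).trace).re) := by
      rw [Complex.sub_re, Complex.sub_re, Complex.re_ofReal_mul, Complex.re_ofReal_mul,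
        Complex.sub_re, Complex.ofReal_re]
    rw [e1, hSωre] at hcs
    linarith
  have hSS : ((S * S * ω).trace).re
      = ∑ i : Fin k, ∑ j : Fin k, ((KEP M i * KEP M j * ω).trace).re := by
    have hmat : S * S * ω = ∑ i : Fin k, ∑ j : Fin k, KEP M i * KEP M j * ω := by
      rw [hS, Finset.sum_mul, Finset.sum_mul]
      refine Finset.sum_congr rfl fun i _ => ?_
      rw [Finset.mul_sum, Finset.sum_mul]
    rw [hmat, Matrix.trace_sum, Complex.re_sum]
    refine Finset.sum_congr rfl fun i _ => ?_
    rw [Matrix.trace_sum, Complex.re_sum]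
  have hbound : ∀ i j : Fin k, ((KEP M i * KEP M j * ω).trace).re
      ≤ if i = j then t else t / (M:ℝ) := by
    intro i j
    by_cases hij : i = j
    · subst hij
      rw [if_pos rfl, show KEP M i * KEP M i * ω = KEP M i * ω by rw [KEP_mul_self hM i],
        htri i]
    · rw [if_neg hij]
      have hoff := KEP_offdiag_bound hM hij hωpsd
      have hconj := KEP_conj_trace i j hωpsd.1
      have hre2 : ((KEP M j * KEP M i * ω).trace).re
          = ((KEP M i * KEP M j * ω).trace).re := by rw [hconj]; simp
      rw [htri i, htri j, hre2] at hoff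
      rw [le_div_iff₀ hmR0]
      rw [← ht] at hoff
      linarith
  have hrow : ∀ i : Fin k, (∑ j : Fin k, if i = j then t else t / (M:ℝ))
      = (k:ℝ) * (t / (M:ℝ)) + (t - t / (M:ℝ)) := by
    intro i
    have hsp : ∀ j : Fin k, (if i = j then t else t / (M:ℝ))
        = t / (M:ℝ) + (if i = j then t - t / (M:ℝ) else 0) := by
      intro j
      by_cases h : i = j <;> simp [h]
    simp only [hsp]
    rw [Finset.sum_add_distrib, Finset.sum_const, Finset.card_univ, Fintype.card_fin,
      nsmul_eq_mul, Finset.sum_ite_eq, if_pos (Finset.mem_univ i)]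
  have hchain : s * s ≤ (k:ℝ) * ((k:ℝ) * (t / (M:ℝ)) + (t - t / (M:ℝ))) := by
    refine le_trans hquad ?_
    rw [hSS]
    calc (∑ i : Fin k, ∑ j : Fin k, ((KEP M i * KEP M j * ω).trace).re)
        ≤ ∑ i : Fin k, ∑ j : Fin k, (if i = j then t else t / (M:ℝ)) := by
          refine Finset.sum_le_sum fun i _ => Finset.sum_le_sum fun j _ => hbound i j
      _ = (k:ℝ) * ((k:ℝ) * (t / (M:ℝ)) + (t - t / (M:ℝ))) := by
          simp only [hrow]
          rw [Finset.sum_const, Finset.card_univ, Fintype.card_fin, nsmul_eq_mul]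
  show t ≤ 1 / (M:ℝ) + 1 / (k:ℝ) - 1 / ((M:ℝ) * (k:ℝ))
  by_cases htpos : t ≤ 0
  · have hcomp : 1 / ((M:ℝ) * (k:ℝ)) ≤ 1 / (M:ℝ) :=
      one_div_le_one_div_of_le hmR0 (le_mul_of_one_le_right hmR0.le hk1R)
    have hkpos : 0 < 1 / (k:ℝ) := by positivity
    linarith
  push_neg at htpos
  have hspos : 0 < s := by rw [hs]; exact mul_pos hkR0 htpos
  have hfact : (k:ℝ) * ((k:ℝ) * (t / (M:ℝ)) + (t - t / (M:ℝ)))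
      = s * (1 + ((k:ℝ) - 1) / (M:ℝ)) := by
    rw [hs]; field_simp; ring
  have hsle : s ≤ 1 + ((k:ℝ) - 1) / (M:ℝ) := by
    have := hchain.trans_eq hfact
    exact le_of_mul_le_mul_left (by linarith [this]) hspos
  have hRHS : 1 / (M:ℝ) + 1 / (k:ℝ) - 1 / ((M:ℝ) * (k:ℝ))
      = (1 + ((k:ℝ) - 1) / (M:ℝ)) / (k:ℝ) := by
    field_simp; ring
  rw [hRHS, le_div_iff₀ hkR0]
  calc t * (k:ℝ) = s := by rw [hs]; ring
    _ ≤ 1 + ((k:ℝ) - 1) / (M:ℝ) := hsle
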